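/- arXiv:1709.07312 — 2 statements merged into one kernel-verified Lean document; each statement's English description precedes it below -/
import Mathlib

section
/- For integers a, b: if a is even then L_a · G_b = G_{b+a} + G_{b−a}, and if a is odd then L_a · G_b = G_{b+a} − G_{b−a}. -/
/-!
For fixed `b`, both `a ↦ L a * G b` and `a ↦ G (b + a) + (-1)^a G (b - a)` satisfy the Fibonacci
recurrence in `a`, and they agree at `a = 0` and `a = 1`; a two-sided sequence satisfying the
recurrence is determined by two consecutive values.
-/

def IsFibonacciLike {R : Type*} [Add R] (f : ℤ → R) : Prop :=
  ∀ n, f (n + 1) = f n + f (n - 1)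

namespace IsFibonacciLike

variable {R : Type*} {f g : ℤ → R}

theorem eq_of_eq_zero_of_eq_one [AddCommGroup R] (hf : IsFibonacciLike f) (hg : IsFibonacciLike g)
    (h0 : f 0 = g 0) (h1 : f 1 = g 1) : f = g := by
  suffices h : ∀ n : ℤ, f n = g n ∧ f (n + 1) = g (n + 1) from funext fun n => (h n).1
  intro n
  induction n using Int.induction_on with
  | zero => simpa using ⟨h0, h1⟩
  | succ n ih =>
    refine ⟨ih.2, ?_⟩
    rw [hf, hg, add_sub_cancel_right, ih.1, ih.2]
  | pred n ih =>
    have hf' := hf (-n)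
    have hg' := hg (-n)
    rw [sub_add_cancel]
    refine ⟨?_, ih.1⟩
    rw [ih.1, ih.2] at hf'
    exact add_left_cancel (hf'.symm.trans hg')

theorem add [AddCommSemigroup R] (hf : IsFibonacciLike f) (hg : IsFibonacciLike g) :
    IsFibonacciLike (f + g) := by
  intro n
  simp only [Pi.add_apply, hf n, hg n]
  exact add_add_add_comm ..

theorem comp_add_right [Add R] (hf : IsFibonacciLike f) (b : ℤ) :
    IsFibonacciLike fun n => f (b + n) := by
  intro n
  simpa [add_assoc, add_sub_assoc] using hf (b + n)

theorem negOnePow_smul_comp_sub [AddCommGroup R] (hf : IsFibonacciLike f) (b : ℤ) :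
    IsFibonacciLike fun n => (n.negOnePow : ℤ) • f (b - n) := by
  intro n
  have hm : b - (n + 1) = b - n - 1 := by ring
  have hp : b - (n - 1) = b - n + 1 := by ring
  simp only [hm, hp, hf (b - n), Int.negOnePow_succ, Int.negOnePow_sub, Int.negOnePow_one,
    mul_neg, mul_one, Units.val_neg, neg_smul, smul_add]
  abel

theorem mul_const [NonUnitalNonAssocSemiring R] (hf : IsFibonacciLike f) (c : R) :
    IsFibonacciLike fun n => f n * c := by
  intro n
  simp only [hf n, add_mul]

end IsFibonacciLike

theorem lucas_mul_eq_add_negOnePow_smul {R : Type*} [Ring R] {L G : ℤ → R}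
    (hL0 : L 0 = 2) (hL1 : L 1 = 1) (hL : IsFibonacciLike L) (hG : IsFibonacciLike G) (a b : ℤ) :
    L a * G b = G (b + a) + (a.negOnePow : ℤ) • G (b - a) := by
  have h := (hL.mul_const (G b)).eq_of_eq_zero_of_eq_one
    ((hG.comp_add_right b).add (hG.negOnePow_smul_comp_sub b)) ?_ ?_
  · exact congrFun h a
  · simp [hL0, two_mul]
  · simp [hL1, hG b]

theorem stmt5 (L G : ℤ → ℤ)
    (hL0 : L 0 = 2) (hL1 : L 1 = 1) (hL : ∀ n : ℤ, L (n+1) = L n + L (n-1))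
    (hG : ∀ n : ℤ, G (n+1) = G n + G (n-1))
    (a b : ℤ) :
    (Even a → L a * G b = G (b+a) + G (b-a)) ∧
    (Odd a → L a * G b = G (b+a) - G (b-a)) := by
  have h := lucas_mul_eq_add_negOnePow_smul hL0 hL1 hL hG a b
  refine ⟨fun ha => ?_, fun ha => ?_⟩
  · simpa [Int.negOnePow_even a ha] using h
  · simpa [Int.negOnePow_odd a ha, sub_eq_add_neg] using h
end

section
/- If p, q, n, t are integers with p, q, n positive and p even (or alternatively q and n both even), then F_{pq} · ∑_{k=1}^{n} G_{2pk+pq+t} = F_{pn} · ∑_{k=1}^{q} G_{2pk+pn+t}. -/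
/-!
Let `H m = G (m + 1) + G (m - 1)` be the companion of `G` (the Lucas sequence when `G = F`).
Then `G (m + e) - G (m - e) = F e * H m` for even `e`, `G (m + p) - G (m - p) = H_F p * G m` for
odd `p`, and `H (m + 1) + H (m - 1) = 5 * G m`. So for either parity of `p` some `X` satisfying the
recurrence and some `D ≠ 0` have `X (m + p) - X (m - p) = D * G m`, and `D * ∑_{k=1}^n G (2pk + c)`
telescopes to `X (2pn + p + c) - X (p + c) = F (pn) * H_X (pn + p + c)` when `pn` is even.
For `c = pq + t` this is symmetric in `n` and `q` after multiplying by `F (pq)`.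
-/

open Finset

def IsFibLike (G : ℤ → ℤ) : Prop :=
  ∀ m, G (m + 1) = G m + G (m - 1)

structure IsFib (F : ℤ → ℤ) : Prop where
  zero : F 0 = 0
  one : F 1 = 1
  isFibLike : IsFibLike F

def companion (G : ℤ → ℤ) (m : ℤ) : ℤ :=
  G (m + 1) + G (m - 1)

theorem isFibLike_companion {G : ℤ → ℤ} (hG : IsFibLike G) : IsFibLike (companion G) := by
  intro m
  simp only [companion]
  linear_combination (norm := ring_nf) hG (m + 1) + hG (m - 1)

theorem companion_companion {G : ℤ → ℤ} (hG : IsFibLike G) (m : ℤ) :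
    companion (companion G) m = 5 * G m := by
  simp only [companion]
  linear_combination (norm := ring_nf) hG (m + 1) + hG m - hG (m - 1)

namespace IsFib

variable {F G : ℤ → ℤ}

theorem apply_natCast (hF : IsFib F) (r : ℕ) : F r = Nat.fib r := by
  induction r using Nat.twoStepInduction with
  | zero => simpa using hF.zero
  | one => simpa using hF.one
  | more r ih₀ ih₁ =>
    have h := hF.isFibLike (r + 1)
    rw [Nat.fib_add_two]
    push_cast at ih₁ h ⊢
    linear_combination (norm := ring_nf) h + ih₁ + ih₀

theorem apply_nonneg (hF : IsFib F) {r : ℤ} (hr : 0 ≤ r) : 0 ≤ F r := by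
  lift r to ℕ using hr
  rw [hF.apply_natCast]
  positivity

theorem apply_pos (hF : IsFib F) {r : ℤ} (hr : 0 < r) : 0 < F r := by
  lift r to ℕ using hr.le
  rw [hF.apply_natCast]
  exact_mod_cast Nat.fib_pos.mpr (by omega)

theorem neg_one_pow_mul_apply_neg (hF : IsFib F) (r : ℕ) : (-1) ^ r * F (-r) = -F r := by
  induction r using Nat.twoStepInduction with
  | zero => simp [hF.zero]
  | one => linear_combination (norm := ring_nf) hF.isFibLike 0 + hF.zero
  | more r ih₀ ih₁ =>
    have h := hF.isFibLike (-(r : ℤ) - 1)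
    have h' := hF.isFibLike ((r : ℤ) + 1)
    push_cast at ih₁ ⊢
    linear_combination (norm := ring_nf) ih₀ + ih₁ - (-1) ^ r * h + h'

theorem apply_add (hF : IsFib F) (hG : IsFibLike G) (r m : ℤ) :
    G (m + r) = F r * G (m + 1) + F (r - 1) * G m := by
  induction r using Int.induction_on generalizing m with
  | zero =>
    linear_combination (norm := ring_nf)
      G m * hF.isFibLike 0 - G m * hF.one + (G m - G (m + 1)) * hF.zero
  | succ k ih =>
    linear_combination (norm := ring_nf) ih (m + 1) + F k * hG (m + 1) - G (m + 1) * hF.isFibLike k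
  | pred k ih =>
    linear_combination (norm := ring_nf)
      ih (m - 1) + G m * hF.isFibLike (-(k : ℤ) - 1) - F (-(k : ℤ) - 1) * hG m

end IsFib

namespace IsFibLike

variable {F G : ℤ → ℤ}

theorem sub_neg_one_pow_mul (hG : IsFibLike G) (hF : IsFib F) (r : ℕ) (m : ℤ) :
    G (m + r) - (-1) ^ r * G (m - r) = F r * companion G m := by
  have h₁ := hF.apply_add hG r m
  have h₂ := hF.apply_add hG (-r) m
  have n₁ := hF.neg_one_pow_mul_apply_neg r
  have n₂ := hF.neg_one_pow_mul_apply_neg (r + 1)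
  push_cast at n₂
  simp only [companion]
  linear_combination (norm := ring_nf)
    h₁ - (-1) ^ r * h₂ - G (m + 1) * n₁ + G m * n₂ - G m * hF.isFibLike r + F r * hG m

theorem add_neg_one_pow_mul (hG : IsFibLike G) (hF : IsFib F) (r : ℕ) (m : ℤ) :
    G (m + r) + (-1) ^ r * G (m - r) = companion F r * G m := by
  have h₁ := hF.apply_add hG r m
  have h₂ := hF.apply_add hG (-r) m
  have n₁ := hF.neg_one_pow_mul_apply_neg r
  have n₂ := hF.neg_one_pow_mul_apply_neg (r + 1)
  push_cast at n₂
  simp only [companion]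
  linear_combination (norm := ring_nf) h₁ + (-1) ^ r * h₂ + G (m + 1) * n₁ - G m * n₂

end IsFibLike

theorem mul_sum_Icc_eq_sub {X G : ℤ → ℤ} {D p : ℤ} (hX : ∀ m, X (m + p) - X (m - p) = D * G m)
    (c : ℤ) (n : ℕ) :
    D * ∑ k ∈ Icc 1 n, G (2 * p * k + c) = X (2 * p * n + p + c) - X (p + c) := by
  induction n with
  | zero => simp
  | succ n ih =>
    rw [sum_Icc_succ_top (by omega), mul_add, ih, ← hX]
    push_cast
    ring_nf

theorem IsFibLike.mul_sum_Icc_eq_of_even {F X G : ℤ → ℤ} {D : ℤ} {p n : ℕ} (hX : IsFibLike X)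
    (hF : IsFib F) (hXG : ∀ m, X (m + p) - X (m - p) = D * G m) (hpn : Even (p * n)) (c : ℤ) :
    D * ∑ k ∈ Icc 1 n, G (2 * p * k + c) = F (p * n) * companion X (p * n + p + c) := by
  have h := hX.sub_neg_one_pow_mul hF (p * n) (p * n + p + c)
  rw [hpn.neg_one_pow, one_mul] at h
  push_cast at h
  rw [mul_sum_Icc_eq_sub hXG, ← h]
  ring_nf

theorem IsFib.exists_sub_eq_mul {F G : ℤ → ℤ} (hF : IsFib F) (hG : IsFibLike G) {p : ℕ}
    (hp : 0 < p) : ∃ X D, IsFibLike X ∧ D ≠ 0 ∧ ∀ m, X (m + p) - X (m - p) = D * G m := by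
  rcases Nat.even_or_odd p with hpe | hpo
  · refine ⟨companion G, 5 * F p, isFibLike_companion hG, ?_, fun m => ?_⟩
    · have hFp := hF.apply_pos (r := p) (by omega)
      positivity
    · rw [mul_comm 5, mul_assoc, ← companion_companion hG,
        ← (isFibLike_companion hG).sub_neg_one_pow_mul hF, hpe.neg_one_pow, one_mul]
  · refine ⟨G, companion F p, hG, ?_, fun m => ?_⟩
    · exact (add_pos_of_pos_of_nonneg (hF.apply_pos (by omega)) (hF.apply_nonneg (by omega))).ne'
    · rw [← hG.add_neg_one_pow_mul hF, hpo.neg_one_pow, neg_one_mul, sub_eq_add_neg]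

theorem stmt13_general (F G : ℤ → ℤ)
    (hF0 : F 0 = 0) (hF1 : F 1 = 1) (hF : ∀ m : ℤ, F (m+1) = F m + F (m-1))
    (hG : ∀ m : ℤ, G (m+1) = G m + G (m-1))
    (p q n : ℕ) (t : ℤ) (hp : 0 < p)
    (h : Even p ∨ (Even q ∧ Even n)) :
    F (p*q) * ∑ k ∈ Icc 1 n, G ((2*p*k : ℤ) + p*q + t) =
    F (p*n) * ∑ k ∈ Icc 1 q, G ((2*p*k : ℤ) + p*n + t) := by
  have hFib : IsFib F := ⟨hF0, hF1, hF⟩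
  have hpn : Even (p * n) := Nat.even_mul.mpr (h.imp_right And.right)
  have hpq : Even (p * q) := Nat.even_mul.mpr (h.imp_right And.left)
  obtain ⟨X, D, hX, hD, hXG⟩ := hFib.exists_sub_eq_mul hG hp
  have sum_n := hX.mul_sum_Icc_eq_of_even hFib hXG hpn (p * q + t)
  have sum_q := hX.mul_sum_Icc_eq_of_even hFib hXG hpq (p * n + t)
  apply mul_left_cancel₀ hD
  linear_combination (norm := ring_nf) F (p * q) * sum_n - F (p * n) * sum_q

theorem stmt13 (F G : ℤ → ℤ)
    (hF0 : F 0 = 0) (hF1 : F 1 = 1) (hF : ∀ m : ℤ, F (m+1) = F m + F (m-1))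
    (hG : ∀ m : ℤ, G (m+1) = G m + G (m-1))
    (p q n : ℕ) (t : ℤ) (hp : 0 < p) (hq : 0 < q) (hn : 0 < n)
    (h : Even p ∨ (Even q ∧ Even n)) :
    F (p*q) * ∑ k ∈ Icc 1 n, G ((2*p*k : ℤ) + p*q + t) =
    F (p*n) * ∑ k ∈ Icc 1 q, G ((2*p*k : ℤ) + p*n + t) :=
  stmt13_general F G hF0 hF1 hF hG p q n t hp h
end
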